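/- arXiv:2511.04275 — 9 statements merged into one kernel-verified Lean document; each statement's English description precedes it below -/
import Mathlib

section
/- Let X_1,…,X_n ∈ ℝ^d, let Y ∈ ℝ^n, let κ : ℝ^d × ℝ^d → ℝ be a symmetric kernel, let λ > 0, and let f̂(x) = k(x)ᵀ(K + λI)^{-1}Y be the kernel ridge regression estimator, where K = (κ(X_i,X_j))_{i,j∈[n]} and k(x) = (κ(x,X_1),…,κ(x,X_n))ᵀ. Fix x_{n+1} ∈ ℝ^d, let K⁺ = (κ(Z_i,Z_j))_{i,j∈[n+1]} be the Gram matrix on the augmented feature set (Z_1,…,Z_{n+1}) = (X_1,…,X_n,x_{n+1}), and assume K and K⁺ are positive semidefinite. Let Y⁺ = (Y_1,…,Y_n, f̂(x_{n+1}))ᵀ ∈ ℝ^{n+1}. Then the KRR estimator fitted on the augmented data, f̂⁺(x) = k⁺(x)ᵀ(K⁺ + λI)^{-1}Y⁺ with k⁺(x) = (κ(x,Z_1),…,κ(x,Z_{n+1}))ᵀ, satisfies f̂⁺(x) = f̂(x) for all x ∈ ℝ^d. That is, the KRR estimator is self-stable. -/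
open Matrix

private lemma smul_one_posDef {m : Type*} [Fintype m] [DecidableEq m] {c : ℝ} (hc : 0 < c) :
    (c • (1 : Matrix m m ℝ)).PosDef := by
  rw [smul_one_eq_diagonal]
  exact Matrix.PosDef.diagonal (fun _ => hc)

/-- The kernel ridge regression estimator is self-stable: refitting on the data
augmented with `(x_{n+1}, f̂(x_{n+1}))` yields the identical fitted function. -/
theorem krr_self_stable {d n : ℕ}
    (X : Fin n → Fin d → ℝ) (Y : Fin n → ℝ)
    (κ : (Fin d → ℝ) → (Fin d → ℝ) → ℝ)
    (hκ : ∀ x y, κ x y = κ y x)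
    (lam : ℝ) (hlam : 0 < lam)
    (K : Matrix (Fin n) (Fin n) ℝ)
    (hKdef : K = Matrix.of fun i j => κ (X i) (X j))
    (hK : K.PosSemidef)
    (kvec : (Fin d → ℝ) → Fin n → ℝ) (hkvec : ∀ x i, kvec x i = κ x (X i))
    (fhat : (Fin d → ℝ) → ℝ)
    (hfhat : ∀ x, fhat x = dotProduct (kvec x) ((K + lam • 1)⁻¹ *ᵥ Y))
    (xnew : Fin d → ℝ)
    (Z : Fin (n + 1) → Fin d → ℝ) (hZ : Z = Fin.snoc X xnew)
    (Kplus : Matrix (Fin (n + 1)) (Fin (n + 1)) ℝ)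
    (hKplusdef : Kplus = Matrix.of fun i j => κ (Z i) (Z j))
    (hKplus : Kplus.PosSemidef)
    (Yplus : Fin (n + 1) → ℝ) (hYplus : Yplus = Fin.snoc Y (fhat xnew))
    (fplus : (Fin d → ℝ) → ℝ)
    (hfplus : ∀ x, fplus x =
      dotProduct (fun i => κ x (Z i)) ((Kplus + lam • 1)⁻¹ *ᵥ Yplus)) :
    ∀ x, fplus x = fhat x := by
  set A : Matrix (Fin n) (Fin n) ℝ := K + lam • 1 with hA
  set Ap : Matrix (Fin (n+1)) (Fin (n+1)) ℝ := Kplus + lam • 1 with hAp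
  have hApd : Ap.PosDef := Matrix.PosDef.posSemidef_add hKplus (smul_one_posDef hlam)
  have hAd : A.PosDef := Matrix.PosDef.posSemidef_add hK (smul_one_posDef hlam)
  have hAdet : IsUnit A.det := isUnit_iff_isUnit_det _ |>.1 hAd.isUnit
  have hApdet : IsUnit Ap.det := isUnit_iff_isUnit_det _ |>.1 hApd.isUnit
  set α : Fin n → ℝ := A⁻¹ *ᵥ Y with hαdef
  have hα : A *ᵥ α = Y := by
    rw [hαdef, mulVec_mulVec, Matrix.mul_nonsing_inv _ hAdet, one_mulVec]
  set β : Fin (n+1) → ℝ := Fin.snoc α 0 with hβ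
  have hmain : Ap *ᵥ β = Yplus := by
    funext i
    refine Fin.lastCases ?_ ?_ i
    · -- last row
      have : (Ap *ᵥ β) (Fin.last n) =
          ∑ k : Fin n, Ap (Fin.last n) (Fin.castSucc k) * α k +
            Ap (Fin.last n) (Fin.last n) * 0 := by
        simp [Matrix.mulVec, dotProduct, Fin.sum_univ_castSucc, hβ]
      rw [this]
      have hentry : ∀ k : Fin n, Ap (Fin.last n) (Fin.castSucc k) = kvec xnew k := by
        intro k
        simp [hAp, hKplusdef, hZ, Matrix.one_apply, (Fin.castSucc_lt_last k).ne',
          hkvec, Matrix.add_apply, Matrix.smul_apply]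
      simp only [hentry, mul_zero, add_zero]
      rw [hYplus]
      simp only [Fin.snoc_last]
      rw [hfhat]
      rfl
    · intro j
      have : (Ap *ᵥ β) (Fin.castSucc j) =
          ∑ k : Fin n, Ap (Fin.castSucc j) (Fin.castSucc k) * α k +
            Ap (Fin.castSucc j) (Fin.last n) * 0 := by
        simp [Matrix.mulVec, dotProduct, Fin.sum_univ_castSucc, hβ]
      rw [this]
      have hentry : ∀ k : Fin n, Ap (Fin.castSucc j) (Fin.castSucc k) = A j k := by
        intro k
        simp [hAp, hA, hKplusdef, hKdef, hZ, Matrix.one_apply, Fin.castSucc_inj,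
          Matrix.add_apply, Matrix.smul_apply]
      simp only [hentry, mul_zero, add_zero]
      have := congrFun hα j
      simp only [Matrix.mulVec, dotProduct] at this
      rw [this, hYplus, Fin.snoc_castSucc]
  have hβeq : Ap⁻¹ *ᵥ Yplus = β := by
    rw [← hmain, mulVec_mulVec, Matrix.nonsing_inv_mul _ hApdet, one_mulVec]
  intro x
  rw [hfplus, hβeq, hfhat]
  simp only [dotProduct, hβ, Fin.sum_univ_castSucc, Fin.snoc_castSucc, Fin.snoc_last,
    mul_zero, add_zero, hZ, hkvec]
end

section
/- Let X_1,…,X_n ∈ ℝ^d, let Y ∈ ℝ^n, let κ : ℝ^d × ℝ^d → ℝ be a symmetric kernel whose Gram matrix K = (κ(X_i,X_j))_{i,j∈[n]} is positive semidefinite, and let λ > 0. Let f̂(x) = k(x)ᵀ(K + λI)^{-1}Y with k(x) = (κ(x,X_1),…,κ(x,X_n))ᵀ, let S = K(K + λI)^{-1}, and for x ∈ ℝ^d let ξ(x) = ((K + λI)^{-1}k(x)) ∈ ℝ^n, so that f̂(x) = ξ(x)ᵀY. Fix i ∈ [n] and let f̂_{−i} denote the KRR estimator (with the same kernel κ and parameter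 λ) fitted on the leave-one-out data {(X_j, Y_j)}_{j∈[n], j≠i}. Then S_{ii} ≠ 1 and, for every x ∈ ℝ^d, f̂_{−i}(x) = f̂(x) − (ξ(x)_i / (1 − S_{ii})) · (Y_i − f̂(X_i)), where ξ(x)_i is the i-th coordinate of ξ(x). -/
open Matrix

private lemma sum_ne_aux {n : ℕ} (i : Fin n) (f : Fin n → ℝ) :
    ∑ a : {j : Fin n // j ≠ i}, f a.val = (∑ a, f a) - f i := by
  rw [← Finset.sum_subtype (Finset.univ.erase i) (by simp [Finset.mem_erase]) f,
    Finset.sum_erase_eq_sub (Finset.mem_univ i)]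

/-- Leave-one-out prediction formula for kernel ridge regression. -/
theorem krr_loo_prediction {d n : ℕ}
    (X : Fin n → Fin d → ℝ) (Y : Fin n → ℝ)
    (κ : (Fin d → ℝ) → (Fin d → ℝ) → ℝ)
    (hκ : ∀ x y, κ x y = κ y x)
    (lam : ℝ) (hlam : 0 < lam)
    (K : Matrix (Fin n) (Fin n) ℝ)
    (hKdef : K = Matrix.of fun i j => κ (X i) (X j))
    (hK : K.PosSemidef)
    (kvec : (Fin d → ℝ) → Fin n → ℝ) (hkvec : ∀ x i, kvec x i = κ x (X i))
    (fhat : (Fin d → ℝ) → ℝ)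
    (hfhat : ∀ x, fhat x = dotProduct (kvec x) ((K + lam • 1)⁻¹ *ᵥ Y))
    (S : Matrix (Fin n) (Fin n) ℝ) (hS : S = K * (K + lam • 1)⁻¹)
    (ξ : (Fin d → ℝ) → Fin n → ℝ) (hξ : ∀ x, ξ x = (K + lam • 1)⁻¹ *ᵥ kvec x)
    (i : Fin n)
    (floo : (Fin d → ℝ) → ℝ)
    (hfloo : ∀ x, floo x =
      dotProduct (fun a : {j : Fin n // j ≠ i} => κ x (X a.val))
        (((K.submatrix (fun a : {j : Fin n // j ≠ i} => a.val)
            (fun a : {j : Fin n // j ≠ i} => a.val) + lam • 1)⁻¹) *ᵥ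
          (fun a : {j : Fin n // j ≠ i} => Y a.val))) :
    S i i ≠ 1 ∧
      ∀ x, floo x = fhat x - (ξ x i / (1 - S i i)) * (Y i - fhat (X i)) := by
  classical
  set A : Matrix (Fin n) (Fin n) ℝ := K + lam • 1 with hAdef
  -- A is positive definite
  have hone : (lam • (1 : Matrix (Fin n) (Fin n) ℝ)).PosDef := by
    rw [Matrix.smul_one_eq_diagonal]
    exact Matrix.PosDef.diagonal (fun _ => hlam)
  have hApd : A.PosDef := Matrix.PosDef.posSemidef_add hK hone
  have hAunit : IsUnit A.det := isUnit_iff_ne_zero.mpr (ne_of_gt hApd.det_pos)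
  set N : Matrix (Fin n) (Fin n) ℝ := A⁻¹ with hNdef
  have hNpd : N.PosDef := hApd.inv
  have hAN : A * N = 1 := Matrix.mul_nonsing_inv A hAunit
  -- entrywise identity for A * N = 1
  have h1 : ∀ j l, ∑ m, A j m * N m l = if j = l then 1 else 0 := by
    intro j l
    have := congrFun (congrFun hAN j) l
    simpa [Matrix.mul_apply, Matrix.one_apply] using this
  -- N is symmetric
  have hNsymm : ∀ a b, N a b = N b a := by
    intro a b
    have h := hNpd.isHermitian
    have h2 := congrFun (congrFun h b) a
    simpa [Matrix.conjTranspose_apply] using h2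
  set c : ℝ := N i i with hcdef
  have hc : 0 < c := by
    have := hNpd.dotProduct_mulVec_pos (x := Pi.single i 1) (by
      intro h
      have := congrFun h i
      simp at this)
    rw [hcdef]
    simpa [Matrix.mulVec, dotProduct, Pi.single_apply, Finset.mul_sum] using this
  -- S i i = 1 - lam * c
  have hKA : K = A - lam • 1 := by rw [hAdef]; abel
  have hSii : S i i = 1 - lam * c := by
    have hSeq : S = 1 - lam • N := by
      rw [hS]
      calc K * N = (A - lam • 1) * N := by rw [← hKA]
        _ = A * N - lam • ((1 : Matrix (Fin n) (Fin n) ℝ) * N) := by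
            rw [Matrix.sub_mul, Matrix.smul_mul]
        _ = 1 - lam • N := by rw [hAN, Matrix.one_mul]
    rw [hSeq, hcdef]
    simp [Matrix.one_apply]
  have hne : S i i ≠ 1 := by
    rw [hSii]
    have : 0 < lam * c := mul_pos hlam hc
    intro h; nlinarith
  refine ⟨hne, ?_⟩
  -- the leave-one-out inverse via Sherman-Morrison
  set e : {j : Fin n // j ≠ i} → Fin n := fun a => a.val with hedef
  set B : Matrix {j : Fin n // j ≠ i} {j : Fin n // j ≠ i} ℝ :=
    K.submatrix e e + lam • 1 with hBdef
  have hBA : B = A.submatrix e e := by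
    ext a b
    by_cases h : a = b
    · subst h
      simp [hBdef, hAdef, Matrix.one_apply, hedef]
    · have h' : e a ≠ e b := fun hh => h (Subtype.ext hh)
      simp [hBdef, hAdef, Matrix.one_apply, h, h']
  set M : Matrix {j : Fin n // j ≠ i} {j : Fin n // j ≠ i} ℝ :=
    Matrix.of (fun a b => N a.val b.val - c⁻¹ * (N a.val i * N i b.val)) with hMdef
  have hBM : B * M = 1 := by
    ext a b
    simp only [Matrix.mul_apply, hMdef, Matrix.of_apply, hBA, Matrix.submatrix_apply,
      Matrix.one_apply]
    have expand : ∀ m : {j : Fin n // j ≠ i},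
        A a.val m.val * (N m.val b.val - c⁻¹ * (N m.val i * N i b.val)) =
        A a.val m.val * N m.val b.val
          - c⁻¹ * N i b.val * (A a.val m.val * N m.val i) := by
      intro m; ring
    rw [Finset.sum_congr rfl (fun m _ => expand m), Finset.sum_sub_distrib,
      ← Finset.mul_sum]
    rw [sum_ne_aux i (fun m => A a.val m * N m b.val),
      sum_ne_aux i (fun m => A a.val m * N m i)]
    rw [h1 a.val b.val, h1 a.val i, if_neg a.prop]
    by_cases h : a = b
    · rw [if_pos (congrArg Subtype.val h), if_pos h, ← hcdef]
      field_simp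
      ring
    · rw [if_neg (fun hh => h (Subtype.ext hh)), if_neg h, ← hcdef]
      field_simp
      ring
  have hBinv : B⁻¹ = M := Matrix.inv_eq_right_inv hBM
  intro x
  set kk : Fin n → ℝ := kvec x with hkk
  set v : Fin n → ℝ := N *ᵥ Y with hv
  set u : Fin n → ℝ := ξ x with hu
  have huN : u = N *ᵥ kk := by rw [hu, hξ]
  have hui : u i = ∑ j, kk j * N j i := by
    rw [huN]
    simp only [Matrix.mulVec, dotProduct]
    exact Finset.sum_congr rfl (fun j _ => by rw [hNsymm i j]; ring)
  have hvi : v i = ∑ l, N i l * Y l := by rw [hv]; rfl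
  have hfx : fhat x = ∑ j, ∑ l, kk j * N j l * Y l := by
    rw [hfhat, ← hkk, hv]
    simp only [dotProduct, Matrix.mulVec, Finset.mul_sum]
    refine Finset.sum_congr rfl fun j _ => Finset.sum_congr rfl fun l _ => by ring
  -- fhat (X i) = Y i - lam * v i
  have hfXi : fhat (X i) = Y i - lam * v i := by
    have hkXi : kvec (X i) = fun j => K i j := by
      funext j; rw [hkvec, hKdef]; simp [hκ (X i) (X j)]
    rw [hfhat, hkXi]
    have : dotProduct (fun j => K i j) v = (K *ᵥ v) i := rfl
    rw [this, hKA, Matrix.sub_mulVec, Matrix.smul_mulVec, Matrix.one_mulVec]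
    have : (A *ᵥ v) i = Y i := by
      rw [hv, Matrix.mulVec_mulVec, hAN, Matrix.one_mulVec]
    simp [this, Pi.sub_apply, Pi.smul_apply, smul_eq_mul]
  -- compute floo x
  have hflooval : floo x = fhat x - u i * v i / c := by
    rw [hfloo]
    have hkvκ : (fun a : {j : Fin n // j ≠ i} => κ x (X a.val)) =
        (fun a : {j : Fin n // j ≠ i} => kk a.val) := by
      funext a; rw [hkk, hkvec]
    rw [hkvκ, hBinv]
    simp only [dotProduct, Matrix.mulVec, hMdef, Matrix.of_apply, Finset.mul_sum]
    have step : ∀ a : {j : Fin n // j ≠ i},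
        ∑ b : {j : Fin n // j ≠ i},
          kk a.val * ((N a.val b.val - c⁻¹ * (N a.val i * N i b.val)) * Y b.val) =
        (∑ b, (kk a.val * N a.val b * Y b)) - kk a.val * N a.val i * Y i
          - (c⁻¹ * ((∑ l, N i l * Y l) - N i i * Y i)) * (kk a.val * N a.val i) := by
      intro a
      have hpt : ∀ b : {j : Fin n // j ≠ i},
          kk a.val * ((N a.val b.val - c⁻¹ * (N a.val i * N i b.val)) * Y b.val) =
          kk a.val * N a.val b.val * Y b.val
            - (c⁻¹ * (kk a.val * N a.val i)) * (N i b.val * Y b.val) := by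
        intro b; ring
      rw [Finset.sum_congr rfl (fun b _ => hpt b), Finset.sum_sub_distrib,
        ← Finset.mul_sum, sum_ne_aux i (fun b => kk a.val * N a.val b * Y b),
        sum_ne_aux i (fun b => N i b * Y b)]
      ring
    rw [Finset.sum_congr rfl (fun a _ => step a)]
    rw [Finset.sum_sub_distrib, Finset.sum_sub_distrib]
    rw [sum_ne_aux i (fun a => ∑ b, kk a * N a b * Y b),
      sum_ne_aux i (fun a => kk a * N a i * Y i),
      ← Finset.mul_sum,
      sum_ne_aux i (fun a => kk a * N a i)]
    rw [← hfx, ← hvi]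
    have h2 : ∑ b, kk i * N i b * Y b = kk i * v i := by
      rw [hvi, Finset.mul_sum]
      exact Finset.sum_congr rfl (fun b _ => by ring)
    rw [h2, ← Finset.sum_mul, ← hui, show N i i = c from hcdef.symm]
    have hc0 : c ≠ 0 := ne_of_gt hc
    field_simp
    ring
  rw [hflooval, hSii, hfXi]
  have hlc : lam * c ≠ 0 := ne_of_gt (mul_pos hlam hc)
  have : (1 : ℝ) - (1 - lam * c) = lam * c := by ring
  rw [this]
  field_simp
  ring
end

section
/- Fix α ∈ (0,1), γ > 0, and α_1 ∈ (0,1). Let (err_t)_{t≥1} be any sequence with err_t ∈ {0,1} for all t, and let (α_t)_{t≥1} satisfy the ACI update α_{t+1} = α_t + γ(α − err_t) together with the out-of-range conventions err_t = 0 whenever α_t < 0 and err_t = 1 whenever α_t > 1. Then α_t ∈ [−γ, 1 + γ] for every t ≥ 1. -/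
open Finset

/-- Boundedness of the miscoverage level under the ACI update. -/
theorem aci_bounded (α γ : ℝ) (hα : α ∈ Set.Ioo (0 : ℝ) 1) (hγ : 0 < γ)
    (err αs : ℕ → ℝ)
    (hinit : αs 1 ∈ Set.Ioo (0 : ℝ) 1)
    (herr : ∀ t, 1 ≤ t → err t = 0 ∨ err t = 1)
    (hupd : ∀ t, 1 ≤ t → αs (t + 1) = αs t + γ * (α - err t))
    (hlow : ∀ t, 1 ≤ t → αs t < 0 → err t = 0)
    (hhigh : ∀ t, 1 ≤ t → 1 < αs t → err t = 1) :
    ∀ t, 1 ≤ t → αs t ∈ Set.Icc (-γ) (1 + γ) := by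
  obtain ⟨hα0, hα1⟩ := hα
  intro t ht
  induction t, ht using Nat.le_induction with
  | base =>
    constructor
    · nlinarith [hinit.1]
    · nlinarith [hinit.2]
  | succ n hn ih =>
    obtain ⟨ihl, ihr⟩ := ih
    rw [hupd n hn]
    rcases lt_trichotomy (αs n) 0 with h | h | h
    · rw [hlow n hn h]
      constructor
      · nlinarith
      · nlinarith
    · rcases herr n hn with he | he <;> rw [he] <;> constructor <;> nlinarith
    · rcases le_or_gt (αs n) 1 with h1 | h1
      · rcases herr n hn with he | he <;> rw [he] <;> constructor <;> nlinarith
      · rw [hhigh n hn h1]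
        constructor <;> nlinarith
end

section
/- Fix α ∈ (0,1), γ > 0, and α_1 ∈ (0,1). Let (err_t)_{t≥1} be any sequence with err_t ∈ {0,1} for all t, and let (α_t)_{t≥1} satisfy the ACI update α_{t+1} = α_t + γ(α − err_t) together with the out-of-range conventions err_t = 0 whenever α_t < 0 and err_t = 1 whenever α_t > 1. Then for every T ≥ 1, |(1/T) Σ_{t=1}^{T} err_t − α| ≤ (max{α_1, 1 − α_1} + γ) / (γ T). -/
open Finset

/-- Non-asymptotic long-term coverage bound for the ACI update. -/
theorem aci_coverage_bound (α γ : ℝ) (hα : α ∈ Set.Ioo (0 : ℝ) 1) (hγ : 0 < γ)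
    (err αs : ℕ → ℝ)
    (hinit : αs 1 ∈ Set.Ioo (0 : ℝ) 1)
    (herr : ∀ t, 1 ≤ t → err t = 0 ∨ err t = 1)
    (hupd : ∀ t, 1 ≤ t → αs (t + 1) = αs t + γ * (α - err t))
    (hlow : ∀ t, 1 ≤ t → αs t < 0 → err t = 0)
    (hhigh : ∀ t, 1 ≤ t → 1 < αs t → err t = 1) :
    ∀ T : ℕ, 1 ≤ T →
      |(1 / (T : ℝ)) * ∑ t ∈ Finset.Icc 1 T, err t - α| ≤
        (max (αs 1) (1 - αs 1) + γ) / (γ * T) := by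
  obtain ⟨hα0, hα1⟩ := hα
  obtain ⟨h10, h11⟩ := hinit
  have hbound : ∀ t, 1 ≤ t → -γ ≤ αs t ∧ αs t ≤ 1 + γ := by
    intro t ht
    induction t with
    | zero => omega
    | succ n ih =>
      by_cases hn : 1 ≤ n
      · obtain ⟨l, u⟩ := ih hn
        have hup := hupd n hn
        rcases lt_trichotomy (αs n) 0 with hc | hc | hc
        · have he := hlow n hn hc
          rw [he] at hup
          constructor <;> nlinarith
        · rcases herr n hn with he | he <;> rw [he] at hup <;>
            constructor <;> nlinarith
        · rcases le_or_gt (αs n) 1 with hc1 | hc1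
          · rcases herr n hn with he | he <;> rw [he] at hup <;>
              constructor <;> nlinarith
          · have he := hhigh n hn hc1
            rw [he] at hup
            constructor <;> nlinarith
      · have : n = 0 := by omega
        subst this
        constructor <;> nlinarith
  have htel : ∀ T, 1 ≤ T →
      αs (T + 1) = αs 1 + γ * (T * α - ∑ t ∈ Finset.Icc 1 T, err t) := by
    intro T hT
    induction T with
    | zero => omega
    | succ n ih =>
      by_cases hn : 1 ≤ n
      · rw [Finset.sum_Icc_succ_top (by omega), hupd (n + 1) (by omega), ih hn]
        push_cast; ring
      · have : n = 0 := by omega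
        subst this
        rw [Finset.Icc_self, Finset.sum_singleton, hupd 1 le_rfl]
        push_cast; ring
  intro T hT
  have hTpos : (0 : ℝ) < T := by exact_mod_cast Nat.pos_of_ne_zero (by omega)
  obtain ⟨l, u⟩ := hbound (T + 1) (by omega)
  have ht := htel T hT
  have key : (1 / (T : ℝ)) * ∑ t ∈ Finset.Icc 1 T, err t - α =
      (αs 1 - αs (T + 1)) / (γ * T) := by
    field_simp
    nlinarith [ht]
  rw [key, abs_div, abs_of_pos (by positivity : (0:ℝ) < γ * T)]
  apply div_le_div_of_nonneg_right ?_ (by positivity) |>.trans_eq rfl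
  · rw [abs_le]
    constructor
    · have := le_max_right (αs 1) (1 - αs 1)
      linarith
    · have := le_max_left (αs 1) (1 - αs 1)
      linarith
end

section
/- Fix α ∈ (0,1), γ > 0, and α_1 ∈ (0,1). Let (err_t)_{t≥1} be any sequence with err_t ∈ {0,1} for all t, and let (α_t)_{t≥1} satisfy the ACI update α_{t+1} = α_t + γ(α − err_t) together with the out-of-range conventions err_t = 0 whenever α_t < 0 and err_t = 1 whenever α_t > 1. Then the long-run miscoverage frequency converges to the target level: (1/T) Σ_{t=1}^{T} err_t → α as T → ∞. -/
open Finset Filter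

/-- Long-term coverage guarantee for the ACI update: the empirical miscoverage
frequency converges to the target level `α`. -/
theorem aci_long_term_coverage (α γ : ℝ) (hα : α ∈ Set.Ioo (0 : ℝ) 1) (hγ : 0 < γ)
    (err αs : ℕ → ℝ)
    (hinit : αs 1 ∈ Set.Ioo (0 : ℝ) 1)
    (herr : ∀ t, 1 ≤ t → err t = 0 ∨ err t = 1)
    (hupd : ∀ t, 1 ≤ t → αs (t + 1) = αs t + γ * (α - err t))
    (hlow : ∀ t, 1 ≤ t → αs t < 0 → err t = 0)
    (hhigh : ∀ t, 1 ≤ t → 1 < αs t → err t = 1) :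
    Tendsto (fun T : ℕ => (1 / (T : ℝ)) * ∑ t ∈ Finset.Icc 1 T, err t)
      atTop (nhds α) := by
  obtain ⟨hα0, hα1⟩ := hα
  -- boundedness of αs
  have hb : ∀ t, 1 ≤ t → -γ ≤ αs t ∧ αs t ≤ 1 + γ := by
    intro t ht
    induction t, ht using Nat.le_induction with
    | base =>
      constructor <;> nlinarith [hinit.1, hinit.2]
    | succ n hn ih =>
      rw [hupd n hn]
      rcases lt_or_ge (αs n) 0 with h | h
      · rw [hlow n hn h]
        constructor <;> nlinarith [ih.1]
      · rcases lt_or_ge 1 (αs n) with h1 | h1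
        · rw [hhigh n hn h1]
          constructor <;> nlinarith [ih.2]
        · rcases herr n hn with he | he <;> rw [he] <;>
            constructor <;> nlinarith
  -- telescoping sum
  have hsum : ∀ T, 1 ≤ T →
      ∑ t ∈ Finset.Icc 1 T, err t = T * α + (αs 1 - αs (T + 1)) / γ := by
    intro T hT
    induction T, hT using Nat.le_induction with
    | base =>
      simp only [Finset.Icc_self, Finset.sum_singleton, Nat.cast_one]
      rw [hupd 1 le_rfl]
      field_simp
      ring
    | succ n hn ih =>
      rw [Finset.sum_Icc_succ_top (by omega : 1 ≤ n + 1), ih,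
        hupd (n + 1) (by omega)]
      push_cast
      field_simp
      ring
  -- conclusion
  have key : Tendsto (fun T : ℕ => (1 / (T : ℝ)) * ∑ t ∈ Finset.Icc 1 T, err t - α)
      atTop (nhds 0) := by
    refine squeeze_zero_norm' (a := fun T : ℕ => ((1 + 2 * γ) / γ) * (1 / (T : ℝ))) ?_ ?_
    · filter_upwards [eventually_ge_atTop 1] with T hT
      have hT0 : (0 : ℝ) < T := by exact_mod_cast hT
      rw [hsum T hT]
      have h1 := hb 1 le_rfl
      have h2 := hb (T + 1) (by omega)
      have : (1 / (T : ℝ)) * ((T : ℝ) * α + (αs 1 - αs (T + 1)) / γ) - α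
          = (αs 1 - αs (T + 1)) / γ * (1 / T) := by
        field_simp
        ring
      rw [this, norm_mul, Real.norm_eq_abs, Real.norm_eq_abs,
        abs_of_pos (by positivity : (0:ℝ) < 1 / (T:ℝ))]
      gcongr
      rw [abs_div, abs_of_pos hγ]
      gcongr
      rw [abs_le]
      constructor <;> nlinarith [h1.1, h1.2, h2.1, h2.2]
    · simpa using (tendsto_one_div_atTop_nhds_zero_nat).const_mul ((1 + 2 * γ) / γ)
  have := key.add_const α
  simpa using this
end

section
/- Fix α ∈ (0,1), γ > 0, and α_1 ∈ (0,1). Let (err_t)_{t≥1} be any sequence with err_t ∈ {0,1} for all t, and let (α_t)_{t≥1} satisfy the SFOGD update α_{t+1} = α_t − γ (err_t − α) / sqrt(Σ_{s=1}^{t} (err_s − α)²) together with the out-of-range conventions err_t = 0 whenever α_t < 0 and err_t = 1 whenever α_t > 1. Then α_t ∈ [−γ, 1 + γ] for every t ≥ 1. -/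
open Finset

/-- Boundedness of the quantile parameter under the SFOGD update. -/
theorem sfogd_bounded (α γ : ℝ) (hα : α ∈ Set.Ioo (0 : ℝ) 1) (hγ : 0 < γ)
    (err αs : ℕ → ℝ)
    (hinit : αs 1 ∈ Set.Ioo (0 : ℝ) 1)
    (herr : ∀ t, 1 ≤ t → err t = 0 ∨ err t = 1)
    (hupd : ∀ t, 1 ≤ t → αs (t + 1) = αs t -
      γ * (err t - α) / Real.sqrt (∑ s ∈ Finset.Icc 1 t, (err s - α) ^ 2))
    (hlow : ∀ t, 1 ≤ t → αs t < 0 → err t = 0)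
    (hhigh : ∀ t, 1 ≤ t → 1 < αs t → err t = 1) :
    ∀ t, 1 ≤ t → αs t ∈ Set.Icc (-γ) (1 + γ) := by
  obtain ⟨hα0, hα1⟩ := hα
  -- key facts about the denominator
  have hS : ∀ t, 1 ≤ t →
      0 < Real.sqrt (∑ s ∈ Finset.Icc 1 t, (err s - α) ^ 2) ∧
      |err t - α| ≤ Real.sqrt (∑ s ∈ Finset.Icc 1 t, (err s - α) ^ 2) := by
    intro t ht
    have hmem : t ∈ Finset.Icc 1 t := by simp [ht]
    have hsingle : (err t - α) ^ 2 ≤ ∑ s ∈ Finset.Icc 1 t, (err s - α) ^ 2 :=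
      Finset.single_le_sum (f := fun s => (err s - α) ^ 2) (fun s _ => sq_nonneg _) hmem
    have hne : err t - α ≠ 0 := by
      rcases herr t ht with h | h <;> rw [h] <;> intro hc <;> nlinarith
    have hpos : 0 < (err t - α) ^ 2 := by positivity
    constructor
    · exact Real.sqrt_pos.mpr (lt_of_lt_of_le hpos hsingle)
    · calc |err t - α| = Real.sqrt ((err t - α) ^ 2) := (Real.sqrt_sq_eq_abs _).symm
        _ ≤ _ := Real.sqrt_le_sqrt hsingle
  -- bound on each increment
  have hinc : ∀ t, 1 ≤ t →
      |γ * (err t - α) / Real.sqrt (∑ s ∈ Finset.Icc 1 t, (err s - α) ^ 2)| ≤ γ := by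
    intro t ht
    obtain ⟨hSpos, hle⟩ := hS t ht
    rw [abs_div, abs_mul, abs_of_pos hγ, abs_of_pos hSpos]
    rw [div_le_iff₀ hSpos]
    nlinarith [abs_nonneg (err t - α)]
  intro t ht
  induction t, ht using Nat.le_induction with
  | base => exact ⟨by linarith [hinit.1], by linarith [hinit.2]⟩
  | succ t ht ih =>
    obtain ⟨hSpos, _⟩ := hS t ht
    have hub := hupd t ht
    set d := γ * (err t - α) / Real.sqrt (∑ s ∈ Finset.Icc 1 t, (err s - α) ^ 2) with hd
    have hdle := hinc t ht
    have hd1 : -γ ≤ d := neg_le_of_abs_le hdle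
    have hd2 : d ≤ γ := le_of_abs_le hdle
    rcases lt_or_ge (αs t) 0 with hneg | hge0
    · -- αs t < 0 : err t = 0 so d ≤ 0
      have he := hlow t ht hneg
      have hdnonpos : d ≤ 0 := by
        rw [hd, he]
        apply div_nonpos_of_nonpos_of_nonneg
        · nlinarith
        · exact le_of_lt hSpos
      constructor
      · rw [hub]; linarith [ih.1]
      · rw [hub]; linarith
    · rcases lt_or_ge 1 (αs t) with hgt1 | hle1
      · -- αs t > 1 : err t = 1 so d ≥ 0
        have he := hhigh t ht hgt1
        have hdnonneg : 0 ≤ d := by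
          rw [hd, he]
          apply div_nonneg
          · nlinarith
          · exact le_of_lt hSpos
        constructor
        · rw [hub]; linarith
        · rw [hub]; linarith [ih.2]
      · constructor
        · rw [hub]; linarith
        · rw [hub]; linarith
end

section
/- Let α ∈ (0,1), let T ≥ 1 be an integer, let err_1,…,err_T ∈ {0,1}, and let M ≥ 0. Suppose that for all integers t_0, t_f with 0 ≤ t_0 ≤ t_f ≤ T, | Σ_{t=t_0+1}^{t_f} (err_t − α) / sqrt(Σ_{s=1}^{t} (err_s − α)²) | ≤ M. Then | (1/T) Σ_{t=1}^{T} (err_t − α) | ≤ 2 (M + 1 + α^{-2} log T) T^{-1/4}. -/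
open Finset

/-- Deterministic averaging bound: if all scale-normalized partial sums of the
centered miscoverage indicators are bounded by `M`, then the ordinary average
is small. -/
theorem scale_free_averaging_bound (α : ℝ) (hα : α ∈ Set.Ioo (0 : ℝ) 1)
    (T : ℕ) (hT : 1 ≤ T)
    (err : ℕ → ℝ) (herr : ∀ t, 1 ≤ t → t ≤ T → err t = 0 ∨ err t = 1)
    (M : ℝ) (hM : 0 ≤ M)
    (hbound : ∀ t0 tf : ℕ, t0 ≤ tf → tf ≤ T →
      |∑ t ∈ Finset.Icc (t0 + 1) tf,
        (err t - α) / Real.sqrt (∑ s ∈ Finset.Icc 1 t, (err s - α) ^ 2)| ≤ M) :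
    |(1 / (T : ℝ)) * ∑ t ∈ Finset.Icc 1 T, (err t - α)| ≤
      2 * (M + 1 + (α ^ 2)⁻¹ * Real.log T) * (T : ℝ) ^ (-(1 / 4 : ℝ)) := by
  obtain ⟨hα0, hα1⟩ := hα
  have hTpos : (0:ℝ) < T := by exact_mod_cast Nat.lt_of_lt_of_le Nat.zero_lt_one hT
  set Q : ℕ → ℝ := fun t => Real.sqrt (∑ s ∈ Finset.Icc 1 t, (err s - α) ^ 2) with hQ
  have hQ0 : Q 0 = 0 := by simp [hQ]
  have hQmono : Monotone Q := by
    intro m n hmn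
    apply Real.sqrt_le_sqrt
    apply Finset.sum_le_sum_of_subset_of_nonneg (Finset.Icc_subset_Icc_right hmn)
    intro i _ _; positivity
  have hQpos : ∀ t, 1 ≤ t → t ≤ T → 0 < Q t := by
    intro t h1 h2
    apply Real.sqrt_pos.mpr
    have h1T : (1:ℕ) ≤ T := le_trans h1 h2
    have he : 0 < (err 1 - α)^2 := by
      rcases herr 1 le_rfl h1T with h | h <;> rw [h] <;> nlinarith
    calc (0:ℝ) < (err 1 - α)^2 := he
    _ ≤ ∑ s ∈ Finset.Icc 1 t, (err s - α) ^ 2 :=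
      Finset.single_le_sum (f := fun s => (err s - α)^2) (fun i _ => sq_nonneg _)
        (Finset.mem_Icc.mpr ⟨le_rfl, h1⟩)
  have hQT : Q T ≤ Real.sqrt T := by
    apply Real.sqrt_le_sqrt
    calc ∑ s ∈ Finset.Icc 1 T, (err s - α) ^ 2 ≤ ∑ s ∈ Finset.Icc 1 T, 1 := by
          apply Finset.sum_le_sum
          intro i hi
          simp only [Finset.mem_Icc] at hi
          rcases herr i hi.1 hi.2 with h | h <;> rw [h] <;> nlinarith
      _ = T := by simp
  set b : ℕ → ℝ := fun t => (err t - α) / Q t with hb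
  have key : ∑ t ∈ Finset.Icc 1 T, (err t - α)
      = ∑ i ∈ Finset.range T, (Q (i+1) - Q i) * ∑ t ∈ Finset.Icc (i+1) T, b t := by
    have h1 : ∀ t ∈ Finset.Icc 1 T, (err t - α)
        = ∑ i ∈ Finset.range t, (Q (i+1) - Q i) * b t := by
      intro t ht
      simp only [Finset.mem_Icc] at ht
      rw [← Finset.sum_mul, Finset.sum_range_sub (f := Q), hQ0, sub_zero, hb]
      have := hQpos t ht.1 ht.2
      field_simp
    rw [Finset.sum_congr rfl h1]
    have swap := Finset.sum_Ico_Ico_comm' 0 (T+1) (fun i j => (Q (i+1) - Q i) * b j)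
    simp only [Finset.Ico_add_one_right_eq_Icc, Nat.Ico_zero_eq_range] at swap
    have e1 : ∑ x ∈ Finset.Icc 1 T, ∑ i ∈ Finset.range x, (Q (i+1) - Q i) * b x
        = ∑ x ∈ Finset.Icc 0 T, ∑ i ∈ Finset.range x, (Q (i+1) - Q i) * b x := by
      apply Finset.sum_subset (Finset.Icc_subset_Icc_left (by omega))
      intro x hx hx'
      simp only [Finset.mem_Icc] at hx hx'
      have hx0 : x = 0 := by omega
      simp [hx0]
    have e2 : ∑ i ∈ Finset.range T, (Q (i+1) - Q i) * ∑ t ∈ Finset.Icc (i+1) T, b t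
        = ∑ x ∈ Finset.Icc 0 T, ∑ t ∈ Finset.Icc (x+1) T, (Q (x+1) - Q x) * b t := by
      simp_rw [Finset.mul_sum]
      apply Finset.sum_subset
      · intro x hx
        simp only [Finset.mem_range] at hx
        simp only [Finset.mem_Icc]; omega
      · intro x hx hx'
        simp only [Finset.mem_Icc, Finset.mem_range] at hx hx'
        have hxT : x = T := by omega
        rw [hxT, Finset.Icc_eq_empty (by omega), Finset.sum_empty]
    rw [e1, e2]
    exact swap.symm
  have habs : |∑ t ∈ Finset.Icc 1 T, (err t - α)| ≤ M * Real.sqrt T := by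
    rw [key]
    calc |∑ i ∈ Finset.range T, (Q (i+1) - Q i) * ∑ t ∈ Finset.Icc (i+1) T, b t|
        ≤ ∑ i ∈ Finset.range T, |(Q (i+1) - Q i) * ∑ t ∈ Finset.Icc (i+1) T, b t| :=
          Finset.abs_sum_le_sum_abs _ _
      _ ≤ ∑ i ∈ Finset.range T, (Q (i+1) - Q i) * M := by
          apply Finset.sum_le_sum
          intro i hi
          simp only [Finset.mem_range] at hi
          have hD : 0 ≤ Q (i+1) - Q i := sub_nonneg.mpr (hQmono (Nat.le_succ i))
          rw [abs_mul, abs_of_nonneg hD]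
          exact mul_le_mul_of_nonneg_left (hbound i T (by omega) le_rfl) hD
      _ = M * (Q T - Q 0) := by rw [← Finset.sum_mul, Finset.sum_range_sub (f := Q)]; ring
      _ = M * Q T := by rw [hQ0, sub_zero]
      _ ≤ M * Real.sqrt T := mul_le_mul_of_nonneg_left hQT hM
  have h1 : Real.sqrt T / T ≤ (T:ℝ) ^ (-(1/4:ℝ)) := by
    have e : Real.sqrt T / T = (T:ℝ) ^ (-(1/2:ℝ)) := by
      rw [Real.sqrt_eq_rpow, show -(1/2:ℝ) = 1/2 - 1 by norm_num,
        Real.rpow_sub hTpos, Real.rpow_one]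
    rw [e]
    exact Real.rpow_le_rpow_of_exponent_le (by exact_mod_cast hT) (by norm_num)
  have hX : 0 ≤ (α^2)⁻¹ * Real.log T :=
    mul_nonneg (by positivity) (Real.log_nonneg (by exact_mod_cast hT))
  calc |(1 / (T : ℝ)) * ∑ t ∈ Finset.Icc 1 T, (err t - α)|
      = (1/(T:ℝ)) * |∑ t ∈ Finset.Icc 1 T, (err t - α)| := by
        rw [abs_mul, abs_of_nonneg (by positivity : (0:ℝ) ≤ 1/(T:ℝ))]
    _ ≤ (1/(T:ℝ)) * (M * Real.sqrt T) := by
        apply mul_le_mul_of_nonneg_left habs; positivity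
    _ = M * (Real.sqrt T / T) := by ring
    _ ≤ M * (T:ℝ) ^ (-(1/4:ℝ)) := mul_le_mul_of_nonneg_left h1 hM
    _ ≤ 2 * (M + 1 + (α ^ 2)⁻¹ * Real.log T) * (T : ℝ) ^ (-(1 / 4 : ℝ)) := by
        apply mul_le_mul_of_nonneg_right _ (Real.rpow_nonneg hTpos.le _)
        nlinarith
end

section
/- Fix α ∈ (0,1), γ > 0, and α_1 ∈ (0,1). Let (err_t)_{t≥1} be any sequence with err_t ∈ {0,1} for all t, and let (α_t)_{t≥1} satisfy the SFOGD update α_{t+1} = α_t − γ (err_t − α) / sqrt(Σ_{s=1}^{t} (err_s − α)²) together with the out-of-range conventions err_t = 0 whenever α_t < 0 and err_t = 1 whenever α_t > 1. Then for every integer T ≥ 1, | (1/T) Σ_{t=1}^{T} err_t − α | ≤ 2 ((1 + 3γ)/γ + α^{-2} log T) T^{-1/4}. -/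
open Finset

lemma sfogd_aux_sqrt_div {x : ℝ} (hx : 1 ≤ x) : Real.sqrt x / x = x ^ (-(1 / 2 : ℝ)) := by
  have hx0 : (0 : ℝ) < x := by linarith
  rw [show (-(1 / 2 : ℝ)) = 1 / 2 - 1 by norm_num, Real.rpow_sub hx0, Real.rpow_one,
    ← Real.sqrt_eq_rpow]

lemma sfogd_aux_rpow_mono {x : ℝ} (hx : 1 ≤ x) :
    x ^ (-(1 / 2 : ℝ)) ≤ x ^ (-(1 / 4 : ℝ)) :=
  Real.rpow_le_rpow_of_exponent_le hx (by norm_num)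

set_option maxHeartbeats 1000000 in
/-- Non-asymptotic long-term coverage bound for the SFOGD update. -/
theorem sfogd_coverage_bound (α γ : ℝ) (hα : α ∈ Set.Ioo (0 : ℝ) 1) (hγ : 0 < γ)
    (err αs : ℕ → ℝ)
    (hinit : αs 1 ∈ Set.Ioo (0 : ℝ) 1)
    (herr : ∀ t, 1 ≤ t → err t = 0 ∨ err t = 1)
    (hupd : ∀ t, 1 ≤ t → αs (t + 1) = αs t -
      γ * (err t - α) / Real.sqrt (∑ s ∈ Finset.Icc 1 t, (err s - α) ^ 2))
    (hlow : ∀ t, 1 ≤ t → αs t < 0 → err t = 0)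
    (hhigh : ∀ t, 1 ≤ t → 1 < αs t → err t = 1) :
    ∀ T : ℕ, 1 ≤ T →
      |(1 / (T : ℝ)) * ∑ t ∈ Finset.Icc 1 T, err t - α| ≤
        2 * ((1 + 3 * γ) / γ + (α ^ 2)⁻¹ * Real.log T) * (T : ℝ) ^ (-(1 / 4 : ℝ)) := by
  obtain ⟨hα0, hα1⟩ := hα
  set g : ℕ → ℝ := fun t => err t - α with hgdef
  set S : ℕ → ℝ := fun t => ∑ s ∈ Finset.Icc 1 t, g s ^ 2 with hSdef
  set B : ℕ → ℝ := fun T => ∑ t ∈ Finset.Icc 1 T, g t / Real.sqrt (S t) with hBdef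
  set A : ℕ → ℝ := fun T => ∑ t ∈ Finset.Icc 1 T, g t with hAdef
  have hgsq_pos : ∀ t, 1 ≤ t → 0 < g t ^ 2 := by
    intro t ht
    rcases herr t ht with h | h <;> simp only [hgdef, h] <;> nlinarith
  have hgsq_le : ∀ t, 1 ≤ t → g t ^ 2 ≤ 1 := by
    intro t ht
    rcases herr t ht with h | h <;> simp only [hgdef, h] <;> nlinarith
  have hSpos : ∀ t, 1 ≤ t → 0 < S t := by
    intro t ht
    apply Finset.sum_pos
    · intro s hs
      exact hgsq_pos s (Finset.mem_Icc.mp hs).1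
    · exact ⟨1, Finset.mem_Icc.mpr ⟨le_refl 1, ht⟩⟩
  have hSle : ∀ t : ℕ, S t ≤ t := by
    intro t
    calc S t ≤ ∑ s ∈ Finset.Icc 1 t, (1 : ℝ) := by
          apply Finset.sum_le_sum
          intro s hs
          exact hgsq_le s (Finset.mem_Icc.mp hs).1
      _ = t := by simp [Nat.card_Icc]
  have hgleS : ∀ t, 1 ≤ t → g t ^ 2 ≤ S t := by
    intro t ht
    apply Finset.single_le_sum (f := fun s => g s ^ 2)
    · intro s hs; positivity
    · exact Finset.mem_Icc.mpr ⟨ht, le_refl t⟩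
  have hgabs : ∀ t, 1 ≤ t → |g t| ≤ Real.sqrt (S t) := by
    intro t ht
    rw [← Real.sqrt_sq_eq_abs]
    exact Real.sqrt_le_sqrt (hgleS t ht)
  have hSsucc : ∀ t : ℕ, S (t + 1) = S t + g (t + 1) ^ 2 := by
    intro t
    simp only [hSdef]
    rw [Finset.sum_Icc_succ_top (Nat.le_add_left 1 t)]
  have hSmono : ∀ t : ℕ, S t ≤ S (t + 1) := by
    intro t; rw [hSsucc]; nlinarith [sq_nonneg (g (t+1))]
  -- boundedness of αs
  have hbound : ∀ t, 1 ≤ t → -γ ≤ αs t ∧ αs t ≤ 1 + γ := by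
    intro t ht
    induction t with
    | zero => omega
    | succ n ih =>
      rcases Nat.eq_or_lt_of_le ht with h1 | h1
      · rw [← h1]
        constructor <;> nlinarith [hinit.1, hinit.2]
      · have hn : 1 ≤ n := by omega
        obtain ⟨ihl, ihr⟩ := ih hn
        have hsq := hSpos n hn
        have hsqrt : 0 < Real.sqrt (S n) := Real.sqrt_pos.mpr hsq
        have hstep : |γ * g n / Real.sqrt (S n)| ≤ γ := by
          rw [abs_div, abs_mul, abs_of_pos hγ, abs_of_pos hsqrt, div_le_iff₀ hsqrt]
          have := hgabs n hn
          nlinarith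
        have hupd' := hupd n hn
        have hupd'' : αs (n + 1) = αs n - γ * g n / Real.sqrt (S n) := hupd'
        have habs := abs_le.mp hstep
        constructor
        · by_cases hneg : αs n < 0
          · have he := hlow n hn hneg
            have hgn : g n = -α := by simp [hgdef, he]
            rw [hupd'', hgn]
            have heq : γ * -α / Real.sqrt (S n) = -(γ * α / Real.sqrt (S n)) := by ring
            have hnn : 0 ≤ γ * α / Real.sqrt (S n) := by positivity
            rw [heq]
            linarith
          · push_neg at hneg
            rw [hupd'']; nlinarith [habs.2]
        · by_cases hpos : 1 < αs n
          · have he := hhigh n hn hpos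
            have hgn : g n = 1 - α := by simp [hgdef, he]
            rw [hupd'', hgn]
            have hnn : 0 ≤ γ * (1 - α) / Real.sqrt (S n) := by
              apply div_nonneg _ (le_of_lt hsqrt)
              nlinarith
            linarith
          · push_neg at hpos
            rw [hupd'']; nlinarith [habs.1]
  -- telescoping
  have htel : ∀ T : ℕ, αs (T + 1) = αs 1 - γ * B T := by
    intro T
    induction T with
    | zero => simp [hBdef]
    | succ n ih =>
      have h1 : 1 ≤ n + 1 := by omega
      have hu : αs (n + 1 + 1) = αs (n + 1) - γ * g (n + 1) / Real.sqrt (S (n + 1)) :=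
        hupd (n + 1) h1
      have hBs : B (n + 1) = B n + g (n + 1) / Real.sqrt (S (n + 1)) := by
        simp only [hBdef]
        exact Finset.sum_Icc_succ_top (Nat.le_add_left 1 n) _
      rw [hu, ih, hBs]
      ring
  set M : ℝ := (1 + γ) / γ with hMdef
  have hM0 : 0 < M := by positivity
  have hB : ∀ T : ℕ, |B T| ≤ M := by
    intro T
    have h1 : B T = (αs 1 - αs (T + 1)) / γ := by
      have := htel T
      field_simp
      linarith
    have hb := hbound (T + 1) (by omega)
    have habs2 : |αs 1 - αs (T + 1)| ≤ 1 + γ := by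
      rw [abs_le]
      constructor <;> nlinarith [hinit.1, hinit.2, hb.1, hb.2]
    rw [h1, abs_div, abs_of_pos hγ, hMdef]
    gcongr
  -- Abel summation bound by induction
  have hAbel : ∀ T : ℕ, |A T - Real.sqrt (S T) * B T| ≤ M * Real.sqrt (S T) := by
    intro T
    induction T with
    | zero => simp [hAdef, hBdef, hSdef]
    | succ n ih =>
      have h1 : 1 ≤ n + 1 := by omega
      have hsq : 0 < S (n + 1) := hSpos (n + 1) h1
      have hsqrt : 0 < Real.sqrt (S (n + 1)) := Real.sqrt_pos.mpr hsq
      have hA1 : A (n + 1) = A n + g (n + 1) := by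
        simp only [hAdef]
        rw [Finset.sum_Icc_succ_top (Nat.le_add_left 1 n)]
      have hB1 : B (n + 1) = B n + g (n + 1) / Real.sqrt (S (n + 1)) := by
        simp only [hBdef]
        rw [Finset.sum_Icc_succ_top (Nat.le_add_left 1 n)]
      have hkey : A (n + 1) - Real.sqrt (S (n + 1)) * B (n + 1) =
          (A n - Real.sqrt (S n) * B n) -
            (Real.sqrt (S (n + 1)) - Real.sqrt (S n)) * B n := by
        rw [hA1, hB1]
        field_simp
        ring
      rw [hkey]
      have hmono : Real.sqrt (S n) ≤ Real.sqrt (S (n + 1)) :=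
        Real.sqrt_le_sqrt (hSmono n)
      have hBn := hB n
      calc |A n - Real.sqrt (S n) * B n -
            (Real.sqrt (S (n + 1)) - Real.sqrt (S n)) * B n|
          ≤ |A n - Real.sqrt (S n) * B n| +
            |(Real.sqrt (S (n + 1)) - Real.sqrt (S n)) * B n| := abs_sub _ _
        _ ≤ M * Real.sqrt (S n) +
            (Real.sqrt (S (n + 1)) - Real.sqrt (S n)) * M := by
            have h2 : |(Real.sqrt (S (n + 1)) - Real.sqrt (S n)) * B n| ≤
                (Real.sqrt (S (n + 1)) - Real.sqrt (S n)) * M := by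
              rw [abs_mul, abs_of_nonneg (by linarith)]
              exact mul_le_mul_of_nonneg_left hBn (by linarith)
            linarith [ih]
        _ = M * Real.sqrt (S (n + 1)) := by ring
  -- main bound
  intro T hT
  have hTpos : (0 : ℝ) < T := by exact_mod_cast Nat.lt_of_lt_of_le Nat.zero_lt_one hT
  have hT1 : (1 : ℝ) ≤ T := by exact_mod_cast hT
  have hsqS : Real.sqrt (S T) ≤ Real.sqrt T := Real.sqrt_le_sqrt (hSle T)
  have hsqSnn : 0 ≤ Real.sqrt (S T) := Real.sqrt_nonneg _
  have hAle : |A T| ≤ 2 * M * Real.sqrt T := by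
    have h1 := hAbel T
    have h2 : |Real.sqrt (S T) * B T| ≤ Real.sqrt (S T) * M := by
      rw [abs_mul, abs_of_nonneg hsqSnn]
      exact mul_le_mul_of_nonneg_left (hB T) hsqSnn
    calc |A T| ≤ |A T - Real.sqrt (S T) * B T| + |Real.sqrt (S T) * B T| := by
          have := abs_sub_abs_le_abs_sub (A T) (Real.sqrt (S T) * B T)
          have := abs_add_le (A T - Real.sqrt (S T) * B T) (Real.sqrt (S T) * B T)
          simp at this ⊢
          linarith [abs_add_le (A T - Real.sqrt (S T) * B T) (Real.sqrt (S T) * B T)]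
      _ ≤ M * Real.sqrt (S T) + Real.sqrt (S T) * M := by linarith
      _ = 2 * M * Real.sqrt (S T) := by ring
      _ ≤ 2 * M * Real.sqrt T := by nlinarith
  -- rewrite LHS as |A T| / T
  have hcard : (Finset.Icc 1 T).card = T := by simp [Nat.card_Icc]
  have hLHS : (1 / (T : ℝ)) * ∑ t ∈ Finset.Icc 1 T, err t - α = A T / T := by
    have hAeq : A T = (∑ t ∈ Finset.Icc 1 T, err t) - T * α := by
      simp only [hAdef, hgdef]
      rw [Finset.sum_sub_distrib]
      simp [hcard]
    rw [hAeq]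
    field_simp
  rw [hLHS, abs_div, abs_of_pos hTpos]
  have hMle : M ≤ (1 + 3 * γ) / γ + (α ^ 2)⁻¹ * Real.log T := by
    have hl : (0 : ℝ) ≤ Real.log T := Real.log_nonneg hT1
    have h2 : (0 : ℝ) ≤ (α ^ 2)⁻¹ := by positivity
    have h3 : M ≤ (1 + 3 * γ) / γ := by
      rw [hMdef, div_le_div_iff₀ hγ hγ]
      nlinarith
    nlinarith
  have hpow14 : (0 : ℝ) ≤ (T : ℝ) ^ (-(1 / 4 : ℝ)) := Real.rpow_nonneg (le_of_lt hTpos) _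
  calc |A T| / T ≤ (2 * M * Real.sqrt T) / T := by gcongr
    _ = 2 * M * (Real.sqrt T / T) := by ring
    _ = 2 * M * (T : ℝ) ^ (-(1 / 2 : ℝ)) := by rw [sfogd_aux_sqrt_div hT1]
    _ ≤ 2 * M * (T : ℝ) ^ (-(1 / 4 : ℝ)) :=
        mul_le_mul_of_nonneg_left (sfogd_aux_rpow_mono hT1) (by linarith)
    _ ≤ 2 * ((1 + 3 * γ) / γ + (α ^ 2)⁻¹ * Real.log T) * (T : ℝ) ^ (-(1 / 4 : ℝ)) := by
        nlinarith [mul_le_mul_of_nonneg_right hMle hpow14]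
end

section
/- Fix α ∈ (0,1), γ > 0, and α_1 ∈ (0,1). Let (err_t)_{t≥1} be any sequence with err_t ∈ {0,1} for all t, and let (α_t)_{t≥1} satisfy the SFOGD update α_{t+1} = α_t − γ (err_t − α) / sqrt(Σ_{s=1}^{t} (err_s − α)²) together with the out-of-range conventions err_t = 0 whenever α_t < 0 and err_t = 1 whenever α_t > 1. Then the long-run miscoverage frequency converges to the target level: (1/T) Σ_{t=1}^{T} err_t → α as T → ∞. -/
open Finset Filter

/-- Long-term coverage guarantee for the SFOGD update: the empirical
miscoverage frequency converges to the target level `α`. -/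
theorem sfogd_long_term_coverage (α γ : ℝ) (hα : α ∈ Set.Ioo (0 : ℝ) 1) (hγ : 0 < γ)
    (err αs : ℕ → ℝ)
    (hinit : αs 1 ∈ Set.Ioo (0 : ℝ) 1)
    (herr : ∀ t, 1 ≤ t → err t = 0 ∨ err t = 1)
    (hupd : ∀ t, 1 ≤ t → αs (t + 1) = αs t -
      γ * (err t - α) / Real.sqrt (∑ s ∈ Finset.Icc 1 t, (err s - α) ^ 2))
    (hlow : ∀ t, 1 ≤ t → αs t < 0 → err t = 0)
    (hhigh : ∀ t, 1 ≤ t → 1 < αs t → err t = 1) :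
    Tendsto (fun T : ℕ => (1 / (T : ℝ)) * ∑ t ∈ Finset.Icc 1 T, err t)
      atTop (nhds α) := by
  obtain ⟨hα0, hα1⟩ := hα
  set m : ℝ := min α (1 - α) with hm_def
  have hm : 0 < m := lt_min hα0 (by linarith)
  have hm1 : m ≤ 1 := le_trans (min_le_left _ _) hα1.le
  set S : ℕ → ℝ := fun t => ∑ s ∈ Finset.Icc 1 t, (err s - α) ^ 2 with hS_def
  have hterm_lb : ∀ s, 1 ≤ s → m ^ 2 ≤ (err s - α) ^ 2 := by
    intro s hs
    have h1 : m ≤ α := min_le_left _ _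
    have h2 : m ≤ 1 - α := min_le_right _ _
    rcases herr s hs with h | h <;> rw [h] <;> nlinarith
  have hterm_ub : ∀ s, 1 ≤ s → (err s - α) ^ 2 ≤ 1 := by
    intro s hs
    rcases herr s hs with h | h <;> rw [h] <;> nlinarith
  have hS_lb : ∀ t, 1 ≤ t → m ^ 2 * t ≤ S t := by
    intro t ht
    have : ∑ s ∈ Finset.Icc 1 t, m ^ 2 ≤ S t :=
      Finset.sum_le_sum fun s hs => hterm_lb s (Finset.mem_Icc.mp hs).1
    simpa [Nat.card_Icc, mul_comm] using this
  have hS_ub : ∀ t, S t ≤ t := by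
    intro t
    have : S t ≤ ∑ s ∈ Finset.Icc 1 t, (1 : ℝ) :=
      Finset.sum_le_sum fun s hs => hterm_ub s (Finset.mem_Icc.mp hs).1
    simpa [Nat.card_Icc] using this
  have hS_pos : ∀ t, 1 ≤ t → 0 < S t := by
    intro t ht
    have h1 : (1 : ℝ) ≤ (t : ℝ) := by exact_mod_cast ht
    have := hS_lb t ht
    nlinarith
  have hsqS_m : ∀ t, 1 ≤ t → m ≤ Real.sqrt (S t) := by
    intro t ht
    rw [show m = Real.sqrt (m ^ 2) by rw [Real.sqrt_sq hm.le]]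
    apply Real.sqrt_le_sqrt
    have h1 : (1 : ℝ) ≤ (t : ℝ) := by exact_mod_cast ht
    nlinarith [hS_lb t ht]
  have hsqS_pos : ∀ t, 1 ≤ t → 0 < Real.sqrt (S t) := fun t ht =>
    lt_of_lt_of_le hm (hsqS_m t ht)
  -- step size bound
  have hstep : ∀ t, 1 ≤ t → |γ * (err t - α) / Real.sqrt (S t)| ≤ γ / m := by
    intro t ht
    rw [abs_div, abs_of_nonneg (Real.sqrt_nonneg _), abs_mul, abs_of_nonneg hγ.le]
    apply div_le_div₀ (by positivity) _ hm (hsqS_m t ht)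
    have : |err t - α| ≤ 1 := by
      rcases herr t ht with h | h <;> rw [h, abs_le] <;> constructor <;> linarith
    nlinarith [abs_nonneg (err t - α)]
  -- boundedness of αs
  have hbound : ∀ t, 1 ≤ t → -(γ/m) ≤ αs t ∧ αs t ≤ 1 + γ/m := by
    intro t ht
    induction t, ht using Nat.le_induction with
    | base =>
      constructor
      · have : (0:ℝ) < γ/m := by positivity
        linarith [hinit.1]
      · have : (0:ℝ) < γ/m := by positivity
        linarith [hinit.2]
    | succ t ht ih =>
      have hu := hupd t ht
      have hs := hstep t ht
      rw [abs_le] at hs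
      constructor
      · rcases lt_or_ge (αs t) 0 with hc | hc
        · have he := hlow t ht hc
          have hpos : 0 < γ * α / Real.sqrt (S t) := by
            have := hsqS_pos t ht; positivity
          rw [hu, he]
          have : γ * (0 - α) / Real.sqrt (S t) = -(γ * α / Real.sqrt (S t)) := by ring
          rw [this]
          linarith [ih.1]
        · rw [hu]; linarith [hs.2]
      · rcases lt_or_ge 1 (αs t) with hc | hc
        · have he := hhigh t ht hc
          have hpos : 0 ≤ γ * (1 - α) / Real.sqrt (S t) := by
            have := hsqS_pos t ht
            have : (0:ℝ) ≤ 1 - α := by linarith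
            positivity
          rw [hu, he]
          linarith [ih.2]
        · rw [hu]; linarith [hs.1]
  -- telescoping
  have htel : ∀ T, 1 ≤ T →
      αs (T + 1) = αs 1 - ∑ t ∈ Finset.Icc 1 T, γ * (err t - α) / Real.sqrt (S t) := by
    intro T hT
    induction T, hT using Nat.le_induction with
    | base =>
      have h := hupd 1 le_rfl
      rw [Finset.Icc_self, Finset.sum_singleton]
      exact h
    | succ T hT ih =>
      rw [Finset.sum_Icc_succ_top (by omega : 1 ≤ T + 1), hupd (T+1) (by omega), ih]
      ring
  set B : ℝ := (1 + γ/m) / γ with hB_def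
  have hB_pos : 0 < B := by positivity
  set G : ℕ → ℝ := fun T => ∑ t ∈ Finset.Icc 1 T, (err t - α) / Real.sqrt (S t) with hG_def
  have hG_bound : ∀ T, 1 ≤ T → |G T| ≤ B := by
    intro T hT
    have h0 : ∑ t ∈ Finset.Icc 1 T, γ * (err t - α) / Real.sqrt (S t) = γ * G T := by
      rw [hG_def, Finset.mul_sum]
      exact Finset.sum_congr rfl fun t _ => by ring
    have h1 : γ * G T = αs 1 - αs (T + 1) := by
      rw [htel T hT, h0]; ring
    have h2 := hbound (T+1) (by omega)
    have h3 : |γ * G T| ≤ 1 + γ/m := by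
      rw [h1, abs_le]
      constructor <;> [linarith [hinit.1, h2.2]; linarith [hinit.2, h2.1]]
    rw [abs_mul, abs_of_nonneg hγ.le] at h3
    rw [hB_def, le_div_iff₀ hγ]
    linarith
  -- monotonicity of sqrt S
  have hS_mono : ∀ T, Real.sqrt (S T) ≤ Real.sqrt (S (T+1)) := by
    intro T
    apply Real.sqrt_le_sqrt
    rw [hS_def]
    simp only
    rw [Finset.sum_Icc_succ_top (by omega : 1 ≤ T + 1)]
    nlinarith [sq_nonneg (err (T+1) - α)]
  set D : ℕ → ℝ := fun T => ∑ t ∈ Finset.Icc 1 T, (err t - α) with hD_def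
  -- Abel summation bound
  have habel : ∀ T, 1 ≤ T →
      |D T - Real.sqrt (S T) * G T| ≤ B * (Real.sqrt (S T) - Real.sqrt (S 1)) := by
    intro T hT
    induction T, hT using Nat.le_induction with
    | base =>
      have hne : Real.sqrt (S 1) ≠ 0 := (hsqS_pos 1 le_rfl).ne'
      have : Real.sqrt (S 1) * G 1 = D 1 := by
        rw [hG_def, hD_def]
        simp only [Finset.Icc_self, Finset.sum_singleton]
        field_simp
      rw [this]
      simp
    | succ T hT ih =>
      have hne : Real.sqrt (S (T+1)) ≠ 0 := (hsqS_pos (T+1) (by omega)).ne'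
      have hDs : D (T+1) = D T + (err (T+1) - α) := by
        rw [hD_def]; simp only
        rw [Finset.sum_Icc_succ_top (by omega : 1 ≤ T + 1)]
      have hGs : G (T+1) = G T + (err (T+1) - α) / Real.sqrt (S (T+1)) := by
        rw [hG_def]; simp only
        rw [Finset.sum_Icc_succ_top (by omega : 1 ≤ T + 1)]
      have key : D (T+1) - Real.sqrt (S (T+1)) * G (T+1)
          = (D T - Real.sqrt (S T) * G T) - (Real.sqrt (S (T+1)) - Real.sqrt (S T)) * G T := by
        rw [hDs, hGs]
        field_simp
        ring
      rw [key]
      calc |(D T - Real.sqrt (S T) * G T) - (Real.sqrt (S (T+1)) - Real.sqrt (S T)) * G T|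
          ≤ |D T - Real.sqrt (S T) * G T| + |(Real.sqrt (S (T+1)) - Real.sqrt (S T)) * G T| :=
            abs_sub _ _
        _ ≤ B * (Real.sqrt (S T) - Real.sqrt (S 1))
            + (Real.sqrt (S (T+1)) - Real.sqrt (S T)) * B := by
            apply add_le_add ih
            rw [abs_mul, abs_of_nonneg (by linarith [hS_mono T])]
            exact mul_le_mul_of_nonneg_left (hG_bound T hT) (by linarith [hS_mono T])
        _ = B * (Real.sqrt (S (T+1)) - Real.sqrt (S 1)) := by ring
  -- final bound on D
  have hDbound : ∀ T, 1 ≤ T → |D T| ≤ 2 * B * Real.sqrt T := by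
    intro T hT
    have h1 := habel T hT
    have h2 := hG_bound T hT
    have hsq : Real.sqrt (S T) ≤ Real.sqrt T := Real.sqrt_le_sqrt (hS_ub T)
    have hsqnn : 0 ≤ Real.sqrt (S T) := Real.sqrt_nonneg _
    have hsq1 : 0 ≤ Real.sqrt (S 1) := Real.sqrt_nonneg _
    have : |D T| ≤ |D T - Real.sqrt (S T) * G T| + |Real.sqrt (S T) * G T| := by
      calc |D T| = |(D T - Real.sqrt (S T) * G T) + Real.sqrt (S T) * G T| := by ring_nf
        _ ≤ _ := abs_add_le _ _
    have h4 : |Real.sqrt (S T) * G T| ≤ Real.sqrt (S T) * B := by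
      rw [abs_mul, abs_of_nonneg hsqnn]
      exact mul_le_mul_of_nonneg_left h2 hsqnn
    nlinarith
  -- conclude convergence
  rw [← tendsto_sub_nhds_zero_iff]
  apply squeeze_zero_norm' (a := fun T : ℕ => 2 * B / Real.sqrt T)
  · filter_upwards [eventually_ge_atTop 1] with T hT
    have hTpos : (0:ℝ) < T := by exact_mod_cast hT
    have hcard : ((Finset.Icc 1 T).card : ℝ) = T := by
      rw [Nat.card_Icc, Nat.add_sub_cancel]
    have hDT : D T = (∑ t ∈ Finset.Icc 1 T, err t) - α * T := by
      rw [hD_def]; simp only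
      rw [Finset.sum_sub_distrib, Finset.sum_const, nsmul_eq_mul]
      rw [hcard]; ring
    have heq : (1 / (T:ℝ)) * ∑ t ∈ Finset.Icc 1 T, err t - α = D T / T := by
      rw [hDT]; field_simp
    rw [Real.norm_eq_abs, heq, abs_div, abs_of_pos hTpos]
    have hTsq : Real.sqrt (T:ℝ) * Real.sqrt (T:ℝ) = T := Real.mul_self_sqrt hTpos.le
    have hsp : (0:ℝ) < Real.sqrt T := Real.sqrt_pos.mpr hTpos
    have key : 2 * B * Real.sqrt T / T = 2 * B / Real.sqrt T := by
      field_simp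
      linear_combination hTsq
    have h5 : |D T| / T ≤ 2 * B * Real.sqrt T / T := by
      gcongr
      exact hDbound T hT
    rw [key] at h5
    exact h5
  · have h1 : Tendsto (fun T : ℕ => Real.sqrt T) atTop atTop := by
      apply tendsto_atTop_atTop_of_monotone
      · intro a b hab
        exact Real.sqrt_le_sqrt (by exact_mod_cast hab)
      · intro b
        obtain ⟨n, hn⟩ := exists_nat_ge (b ^ 2)
        refine ⟨n, ?_⟩
        calc b ≤ |b| := le_abs_self b
          _ = Real.sqrt (b ^ 2) := (Real.sqrt_sq_eq_abs b).symm
          _ ≤ Real.sqrt n := Real.sqrt_le_sqrt hn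
    have h2 : Tendsto (fun T : ℕ => (Real.sqrt T)⁻¹) atTop (nhds 0) :=
      h1.inv_tendsto_atTop
    have := h2.const_mul (2 * B)
    simpa [div_eq_mul_inv] using this
end
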